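/- arXiv:1806.10513 — 3 statements merged into one kernel-verified Lean document; each statement's English description precedes it below -/
import Mathlib

section
/- Let G be a finite simple graph and let I be an independent set in G such that every vertex v of I is simplicial (its neighborhood is a clique) and has degree exactly two. Then G has a minimum dominating set S (a dominating set of minimum cardinality) with S ∩ I = ∅. -/
/-!
Among the minimum dominating sets choose one, `S`, with as few vertices of `I` as possible.
If some `v ∈ I` lay in `S`, replace it by a neighbour `a` (one exists as `deg v = 2`): since
`N(v)` is a clique, `a` dominates all of `N[v]`, so the new set still dominates and is no larger,
while `a ∉ I` by independence, so it meets `I` in fewer vertices.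
-/

/-- `S` is a dominating set of `G`: every vertex is in `S` or adjacent to a vertex of `S`. -/
def IsDominatingSet {V : Type*} (G : SimpleGraph V) (S : Finset V) : Prop :=
  ∀ v : V, ∃ u ∈ S, u = v ∨ G.Adj u v

open Finset

theorem IsDominatingSet.univ {V : Type*} [Fintype V] (G : SimpleGraph V) :
    IsDominatingSet G univ :=
  fun v => ⟨v, mem_univ v, Or.inl rfl⟩

theorem IsDominatingSet.insert_erase_of_isClique {V : Type*} [DecidableEq V]
    {G : SimpleGraph V} {S : Finset V} {v a : V} (hS : IsDominatingSet G S)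
    (hv : G.IsClique (G.neighborSet v)) (hva : G.Adj v a) :
    IsDominatingSet G (insert a (S.erase v)) := by
  intro w
  obtain ⟨u, hu, huw⟩ := hS w
  by_cases huv : u = v
  · subst huv
    refine ⟨a, mem_insert_self _ _, ?_⟩
    rcases huw with rfl | huw
    · exact Or.inr hva.symm
    · by_cases haw : a = w
      · exact Or.inl haw
      · exact Or.inr (hv hva huw haw)
  · exact ⟨u, mem_insert_of_mem (mem_erase.2 ⟨huv, hu⟩), huw⟩

theorem exists_isDominatingSet_lex_min {V β : Type*} [Fintype V] [LinearOrder β]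
    (G : SimpleGraph V) (f : Finset V → β) :
    ∃ S, IsDominatingSet G S ∧ ∀ T, IsDominatingSet G T →
      #S < #T ∨ #S = #T ∧ f S ≤ f T := by
  classical
  obtain ⟨S, hS, hmin⟩ := exists_min_image ({S | IsDominatingSet G S} : Finset (Finset V))
    (fun S => toLex (#S, f S)) ⟨univ, by simpa using IsDominatingSet.univ G⟩
  refine ⟨S, by simpa using hS, fun T hT => ?_⟩
  simpa [Prod.Lex.toLex_le_toLex] using hmin T (by simpa using hT)

theorem card_filter_insert_erase_lt {α : Type*} [DecidableEq α] {p : α → Prop}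
    [DecidablePred p] {s : Finset α} {v a : α} (hv : v ∈ s) (hpv : p v) (hpa : ¬ p a) :
    #((insert a (s.erase v)).filter p) < #(s.filter p) := by
  rw [filter_insert, if_neg hpa, filter_erase]
  exact card_erase_lt_of_mem (mem_filter.2 ⟨hv, hpv⟩)

theorem independent_simplicial_degree_two_avoidable_general
    {V : Type*} [Fintype V]
    (G : SimpleGraph V) [DecidableRel G.Adj] (I : Set V)
    (hIndep : ∀ u ∈ I, ∀ v ∈ I, ¬ G.Adj u v)
    (hSimp : ∀ v ∈ I, G.IsClique (G.neighborSet v))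
    (hDeg : ∀ v ∈ I, G.degree v = 2) :
    ∃ S : Finset V, IsDominatingSet G S ∧
      (∀ T : Finset V, IsDominatingSet G T → S.card ≤ T.card) ∧
      ∀ v ∈ I, v ∉ S := by
  classical
  obtain ⟨S, hS, hmin⟩ := exists_isDominatingSet_lex_min G fun S => #(S.filter (· ∈ I))
  refine ⟨S, hS, fun T hT => ?_, fun v hvI hvS => ?_⟩
  · rcases hmin T hT with h | ⟨h, -⟩ <;> omega
  obtain ⟨a, hva⟩ := G.degree_pos_iff_exists_adj v |>.1 (by rw [hDeg v hvI]; norm_num)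
  have haI : a ∉ I := fun haI => hIndep v hvI a haI hva
  have hcard : #(insert a (S.erase v)) ≤ #S :=
    (card_insert_le _ _).trans (card_erase_add_one hvS).le
  rcases hmin _ (hS.insert_erase_of_isClique (hSimp v hvI) hva) with hlt | ⟨-, hle⟩
  · omega
  · exact hle.not_gt (card_filter_insert_erase_lt hvS hvI haI)

/-- If `I` is an independent set of simplicial degree-two vertices in a finite graph `G`,
then `G` has a minimum dominating set containing no vertex of `I`. -/
theorem independent_simplicial_degree_two_avoidable
    {V : Type*} [Fintype V] [DecidableEq V]
    (G : SimpleGraph V) [DecidableRel G.Adj] (I : Set V)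
    (hIndep : ∀ u ∈ I, ∀ v ∈ I, ¬ G.Adj u v)
    (hSimp : ∀ v ∈ I, G.IsClique (G.neighborSet v))
    (hDeg : ∀ v ∈ I, G.degree v = 2) :
    ∃ S : Finset V, IsDominatingSet G S ∧
      (∀ T : Finset V, IsDominatingSet G T → S.card ≤ T.card) ∧
      ∀ v ∈ I, v ∉ S :=
  independent_simplicial_degree_two_avoidable_general G I hIndep hSimp hDeg
end

section
/- Let G be a finite simple graph and let U ⊆ V(G) be a set of vertices such that for each edge {x,y} of the induced subgraph G[U] there exists a vertex v ∈ V(G) \ U whose open neighborhood in G is exactly {x,y}. Then there exists a minimum dominating set S of G such that S ∩ U is a vertex cover of G[U], i.e., every edge of G[U] has at least one endpoint in S. -/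
/-- If every edge of `G[U]` has a private degree-two vertex outside `U` attached to it,
then `G` has a minimum dominating set `S` such that `S ∩ U` is a vertex cover of `G[U]`. -/
theorem minimum_dominating_set_is_vertex_cover_on_U
    {V : Type*} [Fintype V] [DecidableEq V]
    (G : SimpleGraph V) (U : Set V)
    (hpriv : ∀ x ∈ U, ∀ y ∈ U, G.Adj x y →
      ∃ v, v ∉ U ∧ G.neighborSet v = {x, y}) :
    ∃ S : Finset V, IsDominatingSet G S ∧
      (∀ T : Finset V, IsDominatingSet G T → S.card ≤ T.card) ∧
      ∀ x ∈ U, ∀ y ∈ U, G.Adj x y → x ∈ S ∨ y ∈ S := by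
  classical
  set 𝒟 : Finset (Finset V) := Finset.univ.filter (fun S => IsDominatingSet G S) with h𝒟def
  have hmem𝒟 : ∀ S : Finset V, S ∈ 𝒟 ↔ IsDominatingSet G S := by
    intro S; simp [h𝒟def]
  have huniv : (Finset.univ : Finset V) ∈ 𝒟 := by
    rw [hmem𝒟]; intro v; exact ⟨v, Finset.mem_univ v, Or.inl rfl⟩
  obtain ⟨S₀, hS₀mem, hS₀min⟩ := 𝒟.exists_min_image Finset.card ⟨_, huniv⟩
  -- bad pairs
  set bad : Finset V → Finset (V × V) := fun S =>
    Finset.univ.filter (fun p : V × V =>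
      p.1 ∈ U ∧ p.2 ∈ U ∧ G.Adj p.1 p.2 ∧ p.1 ∉ S ∧ p.2 ∉ S) with hbaddef
  have hmembad : ∀ S (p : V × V), p ∈ bad S ↔
      p.1 ∈ U ∧ p.2 ∈ U ∧ G.Adj p.1 p.2 ∧ p.1 ∉ S ∧ p.2 ∉ S := by
    intro S p; simp [hbaddef]
  set 𝒟' : Finset (Finset V) := 𝒟.filter (fun S => S.card = S₀.card) with h𝒟'def
  have h𝒟'ne : 𝒟'.Nonempty := ⟨S₀, by simp [h𝒟'def, hS₀mem]⟩
  obtain ⟨S, hSmem, hSmin⟩ := 𝒟'.exists_min_image (fun S => (bad S).card) h𝒟'ne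
  rw [h𝒟'def, Finset.mem_filter] at hSmem
  obtain ⟨hSdom', hScard⟩ := hSmem
  have hSdom : IsDominatingSet G S := (hmem𝒟 S).1 hSdom'
  refine ⟨S, hSdom, ?_, ?_⟩
  · intro T hT
    calc S.card = S₀.card := hScard
    _ ≤ T.card := hS₀min T ((hmem𝒟 T).2 hT)
  · intro x hx y hy hxy
    by_contra hcon
    push_neg at hcon
    obtain ⟨hxS, hyS⟩ := hcon
    obtain ⟨v, hvU, hvN⟩ := hpriv x hx y hy hxy
    have hvx : G.Adj v x := by
      rw [← SimpleGraph.mem_neighborSet, hvN]; left; rfl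
    have hvy : G.Adj v y := by
      rw [← SimpleGraph.mem_neighborSet, hvN]; right; rfl
    -- v ∈ S
    have hvS : v ∈ S := by
      obtain ⟨u, huS, hu⟩ := hSdom v
      rcases hu with rfl | hadj
      · exact huS
      · exfalso
        have : u ∈ G.neighborSet v := hadj.symm
        rw [hvN] at this
        rcases this with rfl | rfl
        · exact hxS huS
        · exact hyS huS
    have hvnex : v ≠ x := fun h => hvU (h ▸ hx)
    -- swapped set
    set S' : Finset V := insert x (S.erase v) with hS'def
    have hS'card : S'.card ≤ S.card := by
      calc S'.card ≤ (S.erase v).card + 1 := Finset.card_insert_le _ _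
      _ = S.card := Finset.card_erase_add_one hvS
    have hxS' : x ∈ S' := Finset.mem_insert_self _ _
    have hS'dom : IsDominatingSet G S' := by
      intro w
      obtain ⟨u, huS, hu⟩ := hSdom w
      by_cases huv : u = v
      · subst huv
        rcases hu with rfl | hadj
        · exact ⟨x, hxS', Or.inr hvx.symm⟩
        · have : w ∈ G.neighborSet u := hadj
          rw [hvN] at this
          rcases this with rfl | rfl
          · exact ⟨w, hxS', Or.inl rfl⟩
          · exact ⟨x, hxS', Or.inr hxy⟩
      · exact ⟨u, Finset.mem_insert_of_mem (Finset.mem_erase_of_ne_of_mem huv huS), hu⟩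
    have hS'𝒟 : S' ∈ 𝒟 := (hmem𝒟 S').2 hS'dom
    have hS'card2 : S'.card = S₀.card := by
      have h1 : S₀.card ≤ S'.card := hS₀min S' hS'𝒟
      omega
    have hS'𝒟' : S' ∈ 𝒟' := by
      rw [h𝒟'def, Finset.mem_filter]; exact ⟨hS'𝒟, hS'card2⟩
    -- bad S' ⊂ bad S
    have hsub : bad S' ⊆ bad S := by
      intro p hp
      rw [hmembad] at hp ⊢
      obtain ⟨h1, h2, h3, h4, h5⟩ := hp
      refine ⟨h1, h2, h3, ?_, ?_⟩
      · intro h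
        exact h4 (Finset.mem_insert_of_mem
          (Finset.mem_erase_of_ne_of_mem (fun e => hvU (e ▸ h1)) h))
      · intro h
        exact h5 (Finset.mem_insert_of_mem
          (Finset.mem_erase_of_ne_of_mem (fun e => hvU (e ▸ h2)) h))
    have hxybadS : (x, y) ∈ bad S := by
      rw [hmembad]; exact ⟨hx, hy, hxy, hxS, hyS⟩
    have hxybadS' : (x, y) ∉ bad S' := by
      rw [hmembad]; push_neg
      intro _ _ _ h; exact absurd hxS' h
    have hlt : (bad S').card < (bad S).card :=
      Finset.card_lt_card (Finset.ssubset_iff_of_subset hsub |>.2 ⟨(x,y), hxybadS, hxybadS'⟩)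
    exact absurd (hSmin S' hS'𝒟') (by omega)
end

section
/- Let G be a finite simple graph, let h ∈ V(G), and let h' ∈ V(G) be a vertex of degree one whose unique neighbor is h. Let A and B be sets with A ∪ B = N_G(h) \ {h'} and A ∩ B = ∅. Let G' be the graph obtained from G by deleting h and h' and adding four new vertices h₁, h₂, h₁', h₂' together with the edges {h₁, h₁'}, {h₂, h₂'}, the edges {h₁, a} for all a ∈ A, and the edges {h₂, b} for all b ∈ B. Then the domination number of G' equals the domination number of G plus one, i.e. opt_DS(G') = opt_DS(G) + 1. -/
/-- The domination number of a finite graph: the minimum cardinality of a dominating set. -/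
noncomputable def domNumber {V : Type*} [Fintype V] (G : SimpleGraph V) : ℕ :=
  sInf {n | ∃ S : Finset V, IsDominatingSet G S ∧ S.card = n}

open Finset

section Domination

variable {V : Type*}

lemma domNumber_le_card [Fintype V] (G : SimpleGraph V) {S : Finset V}
    (hS : IsDominatingSet G S) : domNumber G ≤ S.card :=
  Nat.sInf_le ⟨S, hS, rfl⟩

lemma exists_isDominatingSet_card_eq_domNumber [Fintype V] (G : SimpleGraph V) :
    ∃ S : Finset V, IsDominatingSet G S ∧ S.card = domNumber G :=
  Nat.sInf_mem (s := {n | ∃ S : Finset V, IsDominatingSet G S ∧ S.card = n})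
    ⟨_, univ, fun v => ⟨v, mem_univ v, Or.inl rfl⟩, rfl⟩

lemma IsDominatingSet.mem_or_mem_of_neighborSet_eq_singleton {G : SimpleGraph V} {S : Finset V}
    (hS : IsDominatingSet G S) {p q : V} (hp : G.neighborSet p = {q}) : p ∈ S ∨ q ∈ S := by
  obtain ⟨u, hu, rfl | hup⟩ := hS p
  · exact Or.inl hu
  · have hu' : u ∈ G.neighborSet p := G.adj_symm hup
    rw [hp, Set.mem_singleton_iff] at hu'
    exact Or.inr (hu' ▸ hu)

end Domination

lemma Finset.card_subtype_add_one_le {α : Type*} (p : α → Prop) [DecidablePred p] {s : Finset α}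
    {x : α} (hx : x ∈ s) (hpx : ¬p x) : (s.subtype p).card + 1 ≤ s.card := by
  rw [card_subtype]
  exact card_lt_card (filter_ssubset.2 ⟨x, hx, hpx⟩)

/-- `G'` arises from `G` by deleting `h, h'` and adding `h₁ = inr 0`, `h₂ = inr 1` with pendant
neighbours `h₁' = inr 2`, `h₂' = inr 3`, where `h₁` is joined to `A` and `h₂` to `B`. -/
structure IsPendantSplit {V : Type*} (G : SimpleGraph V) (h h' : V) (A B : Set V)
    (G' : SimpleGraph ({v : V // v ≠ h ∧ v ≠ h'} ⊕ Fin 4)) : Prop where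
  union_eq : A ∪ B = G.neighborSet h \ {h'}
  adj_inl_inl : ∀ x y : {v : V // v ≠ h ∧ v ≠ h'},
    G'.Adj (Sum.inl x) (Sum.inl y) ↔ G.Adj x.val y.val
  adj_inl_inr : ∀ (x : {v : V // v ≠ h ∧ v ≠ h'}) (i : Fin 4),
    G'.Adj (Sum.inl x) (Sum.inr i) ↔ ((i = 0 ∧ x.val ∈ A) ∨ (i = 1 ∧ x.val ∈ B))
  adj_inr_inr : ∀ i j : Fin 4,
    G'.Adj (Sum.inr i) (Sum.inr j) ↔
      ((i = 0 ∧ j = 2) ∨ (i = 2 ∧ j = 0) ∨ (i = 1 ∧ j = 3) ∨ (i = 3 ∧ j = 1))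

namespace IsPendantSplit

variable {V : Type*} {G : SimpleGraph V} {h h' : V} {A B : Set V}
  {G' : SimpleGraph ({v : V // v ≠ h ∧ v ≠ h'} ⊕ Fin 4)}

lemma neighborSet_inr_two (hG' : IsPendantSplit G h h' A B G') :
    G'.neighborSet (Sum.inr 2) = {Sum.inr 0} := by
  ext (x | j)
  · simp [G'.adj_comm, hG'.adj_inl_inr]
  · simp [hG'.adj_inr_inr]

lemma neighborSet_inr_three (hG' : IsPendantSplit G h h' A B G') :
    G'.neighborSet (Sum.inr 3) = {Sum.inr 1} := by
  ext (x | j)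
  · simp [G'.adj_comm, hG'.adj_inl_inr]
  · simp [hG'.adj_inr_inr]

lemma isDominatingSet_subtype_disjSum [DecidableEq V] (hG' : IsPendantSplit G h h' A B G')
    (hnb : G.neighborSet h' = {h}) {S : Finset V} (hS : IsDominatingSet G S) :
    IsDominatingSet G' ((S.subtype fun v => v ≠ h ∧ v ≠ h').disjSum {0, 1}) := by
  rintro (x | i)
  · obtain ⟨u, hu, hux⟩ := hS x
    by_cases hu' : u ≠ h ∧ u ≠ h'
    · refine ⟨Sum.inl ⟨u, hu'⟩, by simpa using hu, ?_⟩
      rcases hux with rfl | hadj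
      · exact Or.inl rfl
      · exact Or.inr ((hG'.adj_inl_inl _ _).2 hadj)
    have hxAB : x.val ∈ A ∪ B := by
      rw [hG'.union_eq]
      obtain rfl | rfl : u = h ∨ u = h' := by tauto
      · exact ⟨hux.resolve_left (Ne.symm x.2.1), x.2.2⟩
      · have hx : x.val ∈ G.neighborSet u := hux.resolve_left (Ne.symm x.2.2)
        rw [hnb] at hx
        exact absurd hx x.2.1
    rcases hxAB with hxA | hxB
    · exact ⟨Sum.inr 0, by simp,
        Or.inr (G'.adj_symm ((hG'.adj_inl_inr x 0).2 (Or.inl ⟨rfl, hxA⟩)))⟩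
    · exact ⟨Sum.inr 1, by simp,
        Or.inr (G'.adj_symm ((hG'.adj_inl_inr x 1).2 (Or.inr ⟨rfl, hxB⟩)))⟩
  · have hi : ∃ j ∈ ({0, 1} : Finset (Fin 4)), j = i ∨ G'.Adj (Sum.inr j) (Sum.inr i) := by
      simp only [hG'.adj_inr_inr]
      revert i
      decide
    obtain ⟨j, hj, hji⟩ := hi
    exact ⟨Sum.inr j, by simpa using hj, hji.imp (congrArg Sum.inr) id⟩

lemma isDominatingSet_insert_map_toLeft [DecidableEq V] (hG' : IsPendantSplit G h h' A B G')
    (hnb : G.neighborSet h' = {h}) {T : Finset ({v : V // v ≠ h ∧ v ≠ h'} ⊕ Fin 4)}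
    (hT : IsDominatingSet G' T) :
    IsDominatingSet G (insert h (T.toLeft.map (Function.Embedding.subtype _))) := by
  intro v
  by_cases hv : v ≠ h ∧ v ≠ h'
  · obtain ⟨(w | i), hu, hux⟩ := hT (Sum.inl ⟨v, hv⟩)
    · refine ⟨w.val, mem_insert_of_mem (mem_map_of_mem _ (mem_toLeft.2 hu)), ?_⟩
      rcases hux with hwv | hadj
      · exact Or.inl (congrArg Subtype.val (Sum.inl_injective hwv))
      · exact Or.inr ((hG'.adj_inl_inl _ _).1 hadj)
    · have hvAB : v ∈ A ∪ B :=
        (hG'.adj_inl_inr ⟨v, hv⟩ i).1 (G'.adj_symm (hux.resolve_left Sum.inr_ne_inl))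
          |>.imp And.right And.right
      rw [hG'.union_eq] at hvAB
      exact ⟨h, mem_insert_self _ _, Or.inr hvAB.1⟩
  · have hhh' : G.Adj h h' := G.adj_symm (hnb ▸ rfl : h ∈ G.neighborSet h')
    obtain rfl | rfl : v = h ∨ v = h' := by tauto
    · exact ⟨v, mem_insert_self _ _, Or.inl rfl⟩
    · exact ⟨h, mem_insert_self _ _, Or.inr hhh'⟩

lemma two_le_card_toRight (hG' : IsPendantSplit G h h' A B G')
    {T : Finset ({v : V // v ≠ h ∧ v ≠ h'} ⊕ Fin 4)} (hT : IsDominatingSet G' T) :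
    2 ≤ T.toRight.card := by
  rw [Nat.succ_le_iff, one_lt_card]
  rcases hT.mem_or_mem_of_neighborSet_eq_singleton hG'.neighborSet_inr_two with ha | ha <;>
  rcases hT.mem_or_mem_of_neighborSet_eq_singleton hG'.neighborSet_inr_three with hb | hb <;>
  exact ⟨_, mem_toRight.2 ha, _, mem_toRight.2 hb, by decide⟩

end IsPendantSplit

theorem domNumber_split_pendant_vertex_general
    {V : Type*} [Fintype V] [DecidableEq V]
    (G : SimpleGraph V) (h h' : V)
    (hnb : G.neighborSet h' = {h})
    (A B : Set V)
    (hAB : A ∪ B = G.neighborSet h \ {h'})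
    (G' : SimpleGraph ({v : V // v ≠ h ∧ v ≠ h'} ⊕ Fin 4))
    (hAdj₁ : ∀ x y : {v : V // v ≠ h ∧ v ≠ h'},
      G'.Adj (Sum.inl x) (Sum.inl y) ↔ G.Adj x.val y.val)
    (hAdj₂ : ∀ (x : {v : V // v ≠ h ∧ v ≠ h'}) (i : Fin 4),
      G'.Adj (Sum.inl x) (Sum.inr i) ↔ ((i = 0 ∧ x.val ∈ A) ∨ (i = 1 ∧ x.val ∈ B)))
    (hAdj₃ : ∀ i j : Fin 4,
      G'.Adj (Sum.inr i) (Sum.inr j) ↔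
        ((i = 0 ∧ j = 2) ∨ (i = 2 ∧ j = 0) ∨ (i = 1 ∧ j = 3) ∨ (i = 3 ∧ j = 1))) :
    domNumber G' = domNumber G + 1 := by
  have hG' : IsPendantSplit G h h' A B G' := ⟨hAB, hAdj₁, hAdj₂, hAdj₃⟩
  apply le_antisymm
  · obtain ⟨S, hS, hScard⟩ := exists_isDominatingSet_card_eq_domNumber G
    have hSh : (S.subtype fun v => v ≠ h ∧ v ≠ h').card + 1 ≤ S.card := by
      rcases hS.mem_or_mem_of_neighborSet_eq_singleton hnb with hh' | hh
      · exact card_subtype_add_one_le _ hh' fun hv => hv.2 rfl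
      · exact card_subtype_add_one_le _ hh fun hv => hv.1 rfl
    calc domNumber G'
        ≤ ((S.subtype fun v => v ≠ h ∧ v ≠ h').disjSum {0, 1}).card :=
          domNumber_le_card G' (hG'.isDominatingSet_subtype_disjSum hnb hS)
      _ = (S.subtype fun v => v ≠ h ∧ v ≠ h').card + 2 := card_disjSum _ _
      _ ≤ domNumber G + 1 := by omega
  · obtain ⟨T, hT, hTcard⟩ := exists_isDominatingSet_card_eq_domNumber G'
    calc domNumber G + 1
        ≤ (insert h (T.toLeft.map (Function.Embedding.subtype _))).card + 1 := by
          grw [domNumber_le_card G (hG'.isDominatingSet_insert_map_toLeft hnb hT)]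
      _ ≤ T.toLeft.card + 2 := by
          grw [card_insert_le, card_map]
      _ ≤ domNumber G' := by
          have := hG'.two_le_card_toRight hT
          have := card_toLeft_add_card_toRight (u := T)
          omega

/-- Splitting a vertex `h` (with pendant neighbor `h'`) into two vertices `h₁, h₂`, each
with its own pendant neighbor, whose neighborhoods partition the former neighborhood of
`h`, increases the domination number by exactly one.  The vertex set of `G'` is
`{v // v ≠ h ∧ v ≠ h'} ⊕ Fin 4`, where `Sum.inr 0 = h₁`, `Sum.inr 1 = h₂`,
`Sum.inr 2 = h₁'` and `Sum.inr 3 = h₂'`. -/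
theorem domNumber_split_pendant_vertex
    {V : Type*} [Fintype V] [DecidableEq V]
    (G : SimpleGraph V) (h h' : V)
    (hnb : G.neighborSet h' = {h})
    (A B : Set V)
    (hAB : A ∪ B = G.neighborSet h \ {h'})
    (hABdisj : A ∩ B = ∅)
    (G' : SimpleGraph ({v : V // v ≠ h ∧ v ≠ h'} ⊕ Fin 4))
    (hAdj₁ : ∀ x y : {v : V // v ≠ h ∧ v ≠ h'},
      G'.Adj (Sum.inl x) (Sum.inl y) ↔ G.Adj x.val y.val)
    (hAdj₂ : ∀ (x : {v : V // v ≠ h ∧ v ≠ h'}) (i : Fin 4),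
      G'.Adj (Sum.inl x) (Sum.inr i) ↔ ((i = 0 ∧ x.val ∈ A) ∨ (i = 1 ∧ x.val ∈ B)))
    (hAdj₃ : ∀ i j : Fin 4,
      G'.Adj (Sum.inr i) (Sum.inr j) ↔
        ((i = 0 ∧ j = 2) ∨ (i = 2 ∧ j = 0) ∨ (i = 1 ∧ j = 3) ∨ (i = 3 ∧ j = 1))) :
    domNumber G' = domNumber G + 1 :=
  domNumber_split_pendant_vertex_general G h h' hnb A B hAB G' hAdj₁ hAdj₂ hAdj₃
end
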